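/- For the SEMO without reevaluation on OneMinMax under one-bit noise with rate p ∈ [0,1], almost surely, for every t ≥ 0 one has V_t(P_t) ⊆ V_{t+1}(P_{t+1}), where V_t(P_t) denotes the set {V_t(x) : x ∈ P_t} of stored noisy first-coordinate values of the population. -/

import Mathlib

open scoped ENNReal NNReal
open scoped Classical
open MeasureTheory

noncomputable section

/-- The search space `{0,1}^n`. -/
abbrev Pt (n : ℕ) := Fin n → Bool

/-- The OneMax value: number of one-bits. -/
def fval {n : ℕ} (x : Pt n) : ℕ := (Finset.univ.filter fun i => x i = true).card

/-- The OneMinMax objective `g(x) = (f(x), n - f(x))`. -/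
def gval {n : ℕ} (x : Pt n) : ℕ × ℕ := (fval x, n - fval x)

/-- Weak Pareto dominance on `ℕ × ℕ`. -/
def domLe (a b : ℕ × ℕ) : Prop := a.1 ≤ b.1 ∧ a.2 ≤ b.2

/-- Strict Pareto dominance on `ℕ × ℕ`. -/
def domLt (a b : ℕ × ℕ) : Prop := domLe a b ∧ a ≠ b

/-- Flip bit `i` of `x`. -/
def flipBit {n : ℕ} (x : Pt n) (i : Fin n) : Pt n := Function.update x i (!x i)

/-- One-bit mutation: flip one uniformly chosen bit. -/
def mutate {n : ℕ} (x : Pt n) : PMF (Pt n) :=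
  if h : (Finset.univ : Finset (Fin n)).Nonempty then
    (PMF.uniformOfFinset Finset.univ h).map (flipBit x)
  else PMF.pure x

/-- One-bit noise with rate `p`: with probability `p` a uniformly random bit is flipped. -/
def noisyPoint {n : ℕ} (p : ℝ≥0) (hp : p ≤ 1) (x : Pt n) : PMF (Pt n) :=
  (PMF.bernoulli p hp).bind fun b =>
    if b then mutate x else PMF.pure x

/-- The noisy objective value `g̃(x) = g(x̃)`. -/
def noisyG {n : ℕ} (p : ℝ≥0) (hp : p ≤ 1) (x : Pt n) : PMF (ℕ × ℕ) :=
  (noisyPoint p hp x).map gval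

/-- Probability of an event under a `PMF`. -/
def prEvent {α : Type*} (μ : PMF α) (E : Set α) : ℝ≥0∞ := μ.toOuterMeasure E

/-- Distribution of the state of a Markov chain at time `t`. -/
def iterDist {S : Type*} (init : PMF S) (step : S → PMF S) : ℕ → PMF S
  | 0 => init
  | t + 1 => (iterDist init step t).bind step

/-- `notHitBy step good t s` is the probability that starting from `s`, none of the
states at times `0, 1, …, t` satisfies `good`; i.e. `Pr[T > t]` for the hitting time `T`. -/
def notHitBy {S : Type*} (step : S → PMF S) (good : S → Prop) : ℕ → S → ℝ≥0∞
  | 0 => fun s => if good s then 0 else 1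
  | t + 1 => fun s => if good s then 0 else ∑' s', step s s' * notHitBy step good t s'

/-- Expected hitting time of `good`, via `E[T] = ∑_{t ≥ 0} Pr[T > t]`. -/
def expHit {S : Type*} (init : PMF S) (step : S → PMF S) (good : S → Prop) : ℝ≥0∞ :=
  ∑' t : ℕ, ∑' s, init s * notHitBy step good t s

/-- Law of the trajectory `(s_0, …, s_t)` of the Markov chain. -/
def trajPMF {S : Type*} (init : PMF S) (step : S → PMF S) : (t : ℕ) → PMF (Fin (t + 1) → S)
  | 0 => init.map fun s _ => s
  | t + 1 => (trajPMF init step t).bind fun tr =>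
      (step (tr (Fin.last t))).map fun s' => Fin.snoc tr s'

/-- Hitting time of `good` along a trajectory, valued in `ℕ∞`. -/
def hitTime {S : Type*} (good : S → Prop) (traj : ℕ → S) : ℕ∞ :=
  sInf ((fun t : ℕ => (t : ℕ∞)) '' {t | good (traj t)})

/-! ### SEMO without reevaluation -/

/-- State: population members together with their stored noisy objective values. -/
abbrev StateNR (n : ℕ) := Multiset (Pt n × (ℕ × ℕ))

/-- One iteration of the SEMO without reevaluation. -/
def stepNR {n : ℕ} (p : ℝ≥0) (hp : p ≤ 1) (P : StateNR n) : PMF (StateNR n) :=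
  if hP : P = 0 then PMF.pure P else
    (PMF.ofMultiset P hP).bind fun xv =>
      (mutate xv.1).bind fun x' =>
        (noisyG p hp x').map fun w =>
          if ∃ y ∈ P, domLt w y.2 then P
          else (x', w) ::ₘ P.filter fun y => ¬ domLe y.2 w

/-- Initialization: a single uniformly random point with an independent noisy evaluation. -/
def initNR (n : ℕ) (p : ℝ≥0) (hp : p ≤ 1) : PMF (StateNR n) :=
  (PMF.uniformOfFintype (Pt n)).bind fun x =>
    (noisyG p hp x).map fun w => ({(x, w)} : StateNR n)

/-- The set of stored noisy first-coordinate values `V(P)`. -/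
def VvalsNR {n : ℕ} (P : StateNR n) : Set ℕ := {v | ∃ y ∈ P, (y : Pt n × ℕ × ℕ).2.1 = v}

/-- Both extreme values `0` and `n` appear among the stored noisy first coordinates. -/
def goodExNR {n : ℕ} (P : StateNR n) : Prop := 0 ∈ VvalsNR P ∧ (n : ℕ) ∈ VvalsNR P

/-- The true OneMax values of the population cover the whole Pareto front `[0..n]`. -/
def fCoveredNR {n : ℕ} (P : StateNR n) : Prop :=
  {k : ℕ | ∃ y ∈ P, fval (y : Pt n × ℕ × ℕ).1 = k} = Set.Icc 0 n

/-! ### SEMO with reevaluation -/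

/-- State: a finite multiset of points. -/
abbrev StateR (n : ℕ) := Multiset (Pt n)

/-- The elimination procedure: process the elements of the list in order, drawing a fresh
noisy value for each, discarding an element if strictly dominated by a kept one, and
otherwise keeping it while removing the kept elements it dominates. -/
def elimAux {n : ℕ} (p : ℝ≥0) (hp : p ≤ 1) :
    List (Pt n) → Multiset (Pt n × (ℕ × ℕ)) → PMF (Multiset (Pt n × (ℕ × ℕ)))
  | [], kept => PMF.pure kept
  | x :: rest, kept =>
      (noisyG p hp x).bind fun w =>
        if ∃ y ∈ kept, domLt w (y : Pt n × ℕ × ℕ).2 then elimAux p hp rest kept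
        else elimAux p hp rest ((x, w) ::ₘ kept.filter fun y => ¬ domLe y.2 w)

/-- One iteration of the SEMO with reevaluation: uniform parent selection, one-bit
mutation, then elimination of `P ∪ {x'}` processed in a uniformly random order. -/
def stepR {n : ℕ} (p : ℝ≥0) (hp : p ≤ 1) (P : StateR n) : PMF (StateR n) :=
  if hP : P = 0 then PMF.pure P else
    (PMF.ofMultiset P hP).bind fun x =>
      (mutate x).bind fun x' =>
        (PMF.ofMultiset (↑((x' ::ₘ P).toList.permutations) : Multiset (List (Pt n)))
          (by
            simp only [ne_eq, Multiset.coe_eq_zero]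
            exact List.ne_nil_of_mem
              (List.mem_permutations.mpr (List.Perm.refl _)))).bind fun l =>
          (elimAux p hp l 0).map fun kept => kept.map Prod.fst

/-- Initialization: a single uniformly random point. -/
def initR (n : ℕ) : PMF (StateR n) :=
  (PMF.uniformOfFintype (Pt n)).map fun x => ({x} : Multiset (Pt n))

/-- The population contains members of true OneMax value `0` and of value `n`. -/
def goodExR {n : ℕ} (P : StateR n) : Prop :=
  (∃ x ∈ P, fval (x : Pt n) = 0) ∧ (∃ x ∈ P, fval (x : Pt n) = n)

/-- The true OneMax values of the population cover the whole Pareto front `[0..n]`. -/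
def fCoveredR {n : ℕ} (P : StateR n) : Prop :=
  {k : ℕ | ∃ x ∈ P, fval (x : Pt n) = k} = Set.Icc 0 n

/-- Number of distinct true OneMax values in the population. -/
def Lval {n : ℕ} (P : StateR n) : ℕ := (P.map fval).toFinset.card

/-- Append the all-zeros (resp. all-ones) string if no member has value 0 (resp. `n`). -/
def fixExtremes {n : ℕ} (P : StateR n) : StateR n :=
  let P1 := if ∃ x ∈ P, fval (x : Pt n) = 0 then P else ((fun _ => false) : Pt n) ::ₘ P
  if ∃ x ∈ P1, fval (x : Pt n) = n then P1 else ((fun _ => true) : Pt n) ::ₘ P1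

/-- One iteration of the `K`-extreme-values-keeping SEMO with reevaluation, with the
iteration counter as part of the state. -/
def stepK {n : ℕ} (p : ℝ≥0) (hp : p ≤ 1) (K : ℕ) (st : ℕ × StateR n) :
    PMF (ℕ × StateR n) :=
  (stepR p hp st.2).map fun Q => (st.1 + 1, if st.1 < K then fixExtremes Q else Q)

/-! A noisy value `g(x̃)` is still the true value of some point, so every stored value lies in
the image of `g`, which is an antichain for `⪯`. A stored value removed from the population is
weakly dominated by, hence equal to, the value of the newly inserted point. -/

theorem iterDist_support_induction {S : Type*} {init : PMF S} {step : S → PMF S}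
    {I : S → Prop} (h_init : ∀ s ∈ init.support, I s)
    (h_step : ∀ s s', I s → s' ∈ (step s).support → I s') :
    ∀ t, ∀ s ∈ (iterDist init step t).support, I s
  | 0 => h_init
  | t + 1 => by
    intro s hs
    obtain ⟨r, hr, hrs⟩ := (PMF.mem_support_bind_iff _ _ _).mp hs
    exact h_step r s (iterDist_support_induction h_init h_step t r hr) hrs

theorem fval_le {n : ℕ} (x : Pt n) : fval x ≤ n :=
  (Finset.card_filter_le _ _).trans_eq (Finset.card_fin n)

theorem gval_eq_of_domLe {n : ℕ} {x y : Pt n} (h : domLe (gval x) (gval y)) :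
    gval x = gval y := by
  have := fval_le x
  have := fval_le y
  simp only [domLe, gval] at h ⊢
  ext <;> omega

theorem mem_range_gval_of_mem_support_noisyG {n : ℕ} {p : ℝ≥0} {hp : p ≤ 1} {x : Pt n}
    {w : ℕ × ℕ} (hw : w ∈ (noisyG p hp x).support) : w ∈ Set.range (gval (n := n)) := by
  obtain ⟨y, -, rfl⟩ := (PMF.mem_support_map_iff _ _ _).mp hw
  exact Set.mem_range_self y

theorem mem_support_stepNR {n : ℕ} {p : ℝ≥0} {hp : p ≤ 1} {P P' : StateNR n}
    (h : P' ∈ (stepNR p hp P).support) :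
    P' = P ∨ ∃ x' : Pt n, ∃ w ∈ Set.range (gval (n := n)),
      P' = (x', w) ::ₘ P.filter fun y => ¬ domLe y.2 w := by
  unfold stepNR at h
  split_ifs at h
  · exact .inl ((PMF.mem_support_pure_iff _ _).mp h)
  simp only [PMF.support_bind, PMF.support_map, Set.mem_iUnion, Set.mem_image] at h
  obtain ⟨-, -, x', -, w, hw, rfl⟩ := h
  split_ifs
  · exact .inl rfl
  · exact .inr ⟨x', w, mem_range_gval_of_mem_support_noisyG hw, rfl⟩

def StoredValuesInRange {n : ℕ} (P : StateNR n) : Prop :=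
  ∀ y ∈ P, (y : Pt n × ℕ × ℕ).2 ∈ Set.range (gval (n := n))

theorem StoredValuesInRange.of_mem_support_stepNR {n : ℕ} {p : ℝ≥0} {hp : p ≤ 1}
    {P P' : StateNR n} (hP : StoredValuesInRange P) (h : P' ∈ (stepNR p hp P).support) :
    StoredValuesInRange P' := by
  rcases mem_support_stepNR h with rfl | ⟨x', w, hw, rfl⟩
  · exact hP
  · intro y hy
    rcases Multiset.mem_cons.mp hy with rfl | hy
    · exact hw
    · exact hP y (Multiset.mem_of_mem_filter hy)

theorem storedValuesInRange_of_mem_support_initNR {n : ℕ} {p : ℝ≥0} {hp : p ≤ 1}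
    {P : StateNR n} (h : P ∈ (initNR n p hp).support) : StoredValuesInRange P := by
  simp only [initNR, PMF.support_bind, PMF.support_map, Set.mem_iUnion, Set.mem_image] at h
  obtain ⟨x, -, w, hw, rfl⟩ := h
  intro y hy
  rw [Multiset.mem_singleton.mp hy]
  exact mem_range_gval_of_mem_support_noisyG hw

theorem VvalsNR_subset_of_mem_support_stepNR {n : ℕ} {p : ℝ≥0} {hp : p ≤ 1}
    {P P' : StateNR n} (hP : StoredValuesInRange P) (h : P' ∈ (stepNR p hp P).support) :
    VvalsNR P ⊆ VvalsNR P' := by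
  rcases mem_support_stepNR h with rfl | ⟨x', w, ⟨b, rfl⟩, rfl⟩
  · exact subset_rfl
  rintro v ⟨y, hy, rfl⟩
  by_cases hd : domLe y.2 (gval b)
  · obtain ⟨a, ha⟩ := hP y hy
    rw [← ha] at hd
    refine ⟨(x', gval b), Multiset.mem_cons_self _ _, ?_⟩
    rw [← ha, gval_eq_of_domLe hd]
  · exact ⟨y, Multiset.mem_cons_of_mem (Multiset.mem_filter.mpr ⟨hy, hd⟩), rfl⟩

theorem statement4_general (n : ℕ) (p : ℝ≥0) (hp : p ≤ 1) :
    ∀ t : ℕ, ∀ P P' : StateNR n,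
      P ∈ (iterDist (initNR n p hp) (stepNR p hp) t).support →
      P' ∈ (stepNR p hp P).support →
      VvalsNR P ⊆ VvalsNR P' := fun t P _ hP hP' =>
  VvalsNR_subset_of_mem_support_stepNR
    (iterDist_support_induction (fun _ => storedValuesInRange_of_mem_support_initNR)
      (fun _ _ hs => hs.of_mem_support_stepNR) t P hP) hP'

/-- for the SEMO without reevaluation, almost surely the set of stored noisy
first-coordinate values never shrinks: along the trajectories of the chain (i.e. for every
reachable state `P` at any time `t` and every possible successor `P'`), we have
`V_t(P_t) ⊆ V_{t+1}(P_{t+1})`. -/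
theorem statement4 (n : ℕ) (hn : 1 ≤ n) (p : ℝ≥0) (hp : p ≤ 1) :
    ∀ t : ℕ, ∀ P P' : StateNR n,
      P ∈ (iterDist (initNR n p hp) (stepNR p hp) t).support →
      P' ∈ (stepNR p hp P).support →
      VvalsNR P ⊆ VvalsNR P' :=
  statement4_general n p hp

end
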